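/- arXiv:1703.06065 — 7 statements merged into one kernel-verified Lean document; each statement's English description precedes it below -/
import Mathlib

section
/- Variance of the block sampling estimator: with the setup of block matrix-product sampling, if g blocks j_1,...,j_g are drawn i.i.d. with probabilities p_k, and CR = Σ_{t=1}^g A^{(j_t)} B_{(j_t)} / (g p_{j_t}), then for each entry (i_1,i_2), Var[(CR)_{i_1 i_2}] = (1/g)( Σ_{k=1}^G (A^{(k)} B_{(k)})_{i_1 i_2}^2 / p_k − (AB)_{i_1 i_2}^2 ). -/
open Matrix Finset
open scoped Classical
noncomputable section
/-- Squared Frobenius norm. -/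
def frobSq {m n : Type*} [Fintype m] [Fintype n] (A : Matrix m n ℝ) : ℝ := ∑ i, ∑ j, (A i j)^2
/-- Frobenius norm. -/
def frob {m n : Type*} [Fintype m] [Fintype n] (A : Matrix m n ℝ) : ℝ := Real.sqrt (frobSq A)
/-- Spectral (operator) norm. -/
def specNorm {m n : Type*} [Fintype m] [Fintype n] [DecidableEq n] (A : Matrix m n ℝ) : ℝ :=
  ‖LinearMap.toContinuousLinearMap (Matrix.toEuclideanLin A)‖
/-- Moore-Penrose pseudoinverse, via the four Penrose conditions. -/
def IsPinv {m n : Type*} [Fintype m] [Fintype n] (M : Matrix m n ℝ) (P : Matrix n m ℝ) : Prop :=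
  M * P * M = M ∧ P * M * P = P ∧ (M * P)ᵀ = M * P ∧ (P * M)ᵀ = P * M

/-!
The sample `ω : Fin g → Fin G` has the product law `∏ t, p (ω t)`, and the estimator is the sum
`∑ t, f (ω t)` of the i.i.d. terms `f k = c k / (g p k)`, where `c k = (A⁽ᵏ⁾ B₍ₖ₎)ᵢⱼ`.
The variance of a sum of `g` i.i.d. terms is `g` times the variance of one of them, because the
cross terms `t ≠ u` factor through the two one-coordinate marginals. For one term,
`∑ p f² - (∑ p f)² = g⁻² (∑ c² / p - (∑ c)²)` since `∑ c = (A B)ᵢⱼ`.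
-/

def piExpect {κ ι R : Type*} [Fintype κ] [DecidableEq κ] [Fintype ι] [CommSemiring R]
    (p : ι → R) (X : (κ → ι) → R) : R :=
  ∑ ω : κ → ι, (∏ t, p (ω t)) * X ω

section piExpect

variable {κ ι R : Type*} [Fintype κ] [DecidableEq κ] [Fintype ι]

section CommSemiring

variable [CommSemiring R] (p : ι → R)

theorem piExpect_sum {α : Type*} (s : Finset α) (X : α → (κ → ι) → R) :
    piExpect p (fun ω => ∑ a ∈ s, X a ω) = ∑ a ∈ s, piExpect p (X a) := by
  simp only [piExpect, Finset.mul_sum]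
  exact Finset.sum_comm

theorem piExpect_prod (F : κ → ι → R) :
    piExpect p (fun ω => ∏ t, F t (ω t)) = ∏ t, ∑ k, p k * F t k := by
  simp only [piExpect, ← Finset.prod_mul_distrib]
  exact (Fintype.prod_sum fun t k => p k * F t k).symm

variable {p}

theorem piExpect_apply (hp : ∑ k, p k = 1) (t : κ) (F : ι → R) :
    piExpect p (fun ω => F (ω t)) = ∑ k, p k * F k := by
  have hprod := piExpect_prod p (fun s k => if s = t then F k else 1)
  simp only [Finset.prod_ite_eq', Finset.mem_univ, if_true] at hprod
  rw [hprod]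
  simp only [mul_ite, mul_one, Finset.sum_ite_irrel, hp, Finset.prod_ite_eq', Finset.mem_univ,
    if_true]

theorem piExpect_apply_mul_apply (hp : ∑ k, p k = 1) {t u : κ} (htu : t ≠ u) (F H : ι → R) :
    piExpect p (fun ω => F (ω t) * H (ω u)) = (∑ k, p k * F k) * ∑ k, p k * H k := by
  have hprod :=
    piExpect_prod p (fun s k => (if s = t then F k else 1) * (if s = u then H k else 1))
  simp only [Finset.prod_mul_distrib, Finset.prod_ite_eq', Finset.mem_univ, if_true] at hprod
  rw [hprod]
  have marginal : ∀ s, ∑ k, p k * ((if s = t then F k else 1) * (if s = u then H k else 1)) =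
      (if s = t then ∑ k, p k * F k else 1) * (if s = u then ∑ k, p k * H k else 1) := by
    intro s
    by_cases hst : s = t
    · simp [hst, htu]
    · by_cases hsu : s = u <;> simp [hst, hsu, htu.symm, hp]
  simp only [marginal, Finset.prod_mul_distrib, Finset.prod_ite_eq', Finset.mem_univ, if_true]

end CommSemiring

theorem piExpect_sum_sq_sub_sq_piExpect_sum [CommRing R] {p : ι → R} (hp : ∑ k, p k = 1)
    (f : ι → R) :
    piExpect p (fun ω : κ → ι => (∑ t, f (ω t)) ^ 2) -
        piExpect p (fun ω : κ → ι => ∑ t, f (ω t)) ^ 2 =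
      Fintype.card κ * (∑ k, p k * f k ^ 2 - (∑ k, p k * f k) ^ 2) := by
  set μ := ∑ k, p k * f k
  set σ2 := ∑ k, p k * f k ^ 2 - μ ^ 2
  have cross : ∀ t u : κ,
      piExpect p (fun ω => f (ω t) * f (ω u)) = μ ^ 2 + if t = u then σ2 else 0 := by
    intro t u
    by_cases htu : t = u
    · subst htu
      rw [if_pos rfl]
      refine (piExpect_apply hp t fun k => f k * f k).trans ?_
      simp only [σ2, ← sq]
      ring
    · rw [piExpect_apply_mul_apply hp htu, if_neg htu]
      ring
  have second_moment : piExpect p (fun ω : κ → ι => (∑ t, f (ω t)) ^ 2) =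
      Fintype.card κ ^ 2 * μ ^ 2 + Fintype.card κ * σ2 := by
    simp only [sq, Finset.sum_mul_sum, piExpect_sum, cross, Finset.sum_add_distrib,
      Finset.sum_ite_eq, Finset.mem_univ, if_true, Finset.sum_const, Finset.card_univ, nsmul_eq_mul]
    ring
  have mean : piExpect p (fun ω : κ → ι => ∑ t, f (ω t)) = Fintype.card κ * μ := by
    simp only [piExpect_sum, piExpect_apply hp, Finset.sum_const, Finset.card_univ, nsmul_eq_mul, μ]
  rw [second_moment, mean]
  ring

end piExpect

theorem block_sampling_variance_general (m n q G g : ℕ)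
    (s : Fin G → ℕ)
    (A : Matrix (Fin m) (Fin n) ℝ) (B : Matrix (Fin n) (Fin q) ℝ)
    (Ablk : (j : Fin G) → Matrix (Fin m) (Fin (s j)) ℝ)
    (Bblk : (j : Fin G) → Matrix (Fin (s j)) (Fin q) ℝ)
    (hAB : A * B = ∑ j : Fin G, Ablk j * Bblk j)
    (pr : Fin G → ℝ) (hpos : ∀ j, 0 < pr j) (hsum : ∑ j : Fin G, pr j = 1)
    (i₁ : Fin m) (i₂ : Fin q) :
    (∑ ω : Fin g → Fin G, (∏ t, pr (ω t)) *
        (∑ t, ((g : ℝ) * pr (ω t))⁻¹ * (Ablk (ω t) * Bblk (ω t)) i₁ i₂)^2)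
      - (∑ ω : Fin g → Fin G, (∏ t, pr (ω t)) *
        (∑ t, ((g : ℝ) * pr (ω t))⁻¹ * (Ablk (ω t) * Bblk (ω t)) i₁ i₂))^2
      = (1 / (g : ℝ)) *
        ((∑ j : Fin G, ((Ablk j * Bblk j) i₁ i₂)^2 / pr j) - ((A * B) i₁ i₂)^2) := by
  rw [hAB, Matrix.sum_apply]
  obtain ⟨c, hc⟩ : ∃ c : Fin G → ℝ, ∀ k, (Ablk k * Bblk k) i₁ i₂ = c k := ⟨_, fun _ => rfl⟩
  simp only [hc]
  have hterm : ∀ k, pr k * (((g : ℝ) * pr k)⁻¹ * c k) = (g : ℝ)⁻¹ * c k := by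
    intro k; field_simp [(hpos k).ne']
  have hterm_sq :
      ∀ k, pr k * (((g : ℝ) * pr k)⁻¹ * c k) ^ 2 = (g : ℝ)⁻¹ ^ 2 * (c k ^ 2 / pr k) := by
    intro k; field_simp [(hpos k).ne']
  have hvar := piExpect_sum_sq_sub_sq_piExpect_sum (κ := Fin g) hsum
    fun k => ((g : ℝ) * pr k)⁻¹ * c k
  simp only [piExpect, Fintype.card_fin, hterm, hterm_sq, ← Finset.mul_sum] at hvar
  have hg_mul_inv_sq : (g : ℝ) * (g : ℝ)⁻¹ ^ 2 = (g : ℝ)⁻¹ := by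
    simpa only [inv_inv, sq, mul_assoc] using inv_mul_mul_self (g : ℝ)⁻¹
  rw [hvar, one_div]
  linear_combination (∑ k, c k ^ 2 / pr k - (∑ k, c k) ^ 2) * hg_mul_inv_sq

/-- Variance of the block sampling estimator, entrywise. -/
theorem block_sampling_variance (m n q G g : ℕ) (hg : 0 < g)
    (s : Fin G → ℕ)
    (A : Matrix (Fin m) (Fin n) ℝ) (B : Matrix (Fin n) (Fin q) ℝ)
    (Ablk : (j : Fin G) → Matrix (Fin m) (Fin (s j)) ℝ)
    (Bblk : (j : Fin G) → Matrix (Fin (s j)) (Fin q) ℝ)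
    (hAB : A * B = ∑ j : Fin G, Ablk j * Bblk j)
    (pr : Fin G → ℝ) (hpos : ∀ j, 0 < pr j) (hsum : ∑ j : Fin G, pr j = 1)
    (i₁ : Fin m) (i₂ : Fin q) :
    (∑ ω : Fin g → Fin G, (∏ t, pr (ω t)) *
        (∑ t, ((g : ℝ) * pr (ω t))⁻¹ * (Ablk (ω t) * Bblk (ω t)) i₁ i₂)^2)
      - (∑ ω : Fin g → Fin G, (∏ t, pr (ω t)) *
        (∑ t, ((g : ℝ) * pr (ω t))⁻¹ * (Ablk (ω t) * Bblk (ω t)) i₁ i₂))^2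
      = (1 / (g : ℝ)) *
        ((∑ j : Fin G, ((Ablk j * Bblk j) i₁ i₂)^2 / pr j) - ((A * B) i₁ i₂)^2) :=
  block_sampling_variance_general m n q G g s A B Ablk Bblk hAB pr hpos hsum i₁ i₂
end
end

section
/- Expected squared Frobenius error of block sampling: with the setup above, E[||AB − CR||_F^2] = (1/g)( Σ_{k=1}^G ||A^{(k)} B_{(k)}||_F^2 / p_k − ||AB||_F^2 ). -/
open Matrix Finset
open scoped Classical
noncomputable section
/-!
The sampled estimator is a sum of `g` independent copies of `X = M_j / (g p_j)`, `j ∼ p`, where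
`M_j = A^{(j)} B_{(j)}`; each copy has mean `AB / g`. So the error `AB - CR` is a sum of `g`
independent centred terms, and its expected squared norm is the sum of their variances,
`g (E‖X‖² - ‖AB / g‖²)`. The Frobenius norm is a sum of squared entries, so it suffices to do
this for real numbers, entry by entry.
-/

namespace BlockSampling

variable {ι κ : Type*} [Fintype ι] [Fintype κ] [DecidableEq κ]

/-- Expectation over independent draws: `ω t` is the `t`-th draw `j_t`, with law `p`. -/
def iidExpect (p : ι → ℝ) (F : (κ → ι) → ℝ) : ℝ :=
  ∑ ω : κ → ι, (∏ t, p (ω t)) * F ω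

theorem iidExpect_sum {α : Type*} (p : ι → ℝ) (s : Finset α) (F : α → (κ → ι) → ℝ) :
    iidExpect p (fun ω => ∑ a ∈ s, F a ω) = ∑ a ∈ s, iidExpect p (F a) := by
  simp only [iidExpect, Finset.mul_sum]
  exact Finset.sum_comm

theorem iidExpect_prod (p : ι → ℝ) (H : κ → ι → ℝ) :
    iidExpect p (fun ω => ∏ t, H t (ω t)) = ∏ t, ∑ j, p j * H t j := by
  simp only [iidExpect, ← Finset.prod_mul_distrib, Fintype.prod_sum]

variable {p : ι → ℝ}

theorem iidExpect_apply (hp : ∑ j, p j = 1) (h : ι → ℝ) (t : κ) :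
    iidExpect p (fun ω => h (ω t)) = ∑ j, p j * h j := by
  calc iidExpect p (fun ω => h (ω t))
      = iidExpect p (fun ω => ∏ u, (if u = t then h else 1) (ω u)) := by
        congr 1 with ω
        rw [Fintype.prod_eq_single t fun u hu => by simp [hu]]
        simp
    _ = ∑ j, p j * h j := by
        rw [iidExpect_prod, Fintype.prod_eq_single t fun u hu => by simp [hu, hp]]
        simp

theorem iidExpect_apply_mul_apply (hp : ∑ j, p j = 1) (h₁ h₂ : ι → ℝ) {t s : κ} (hts : t ≠ s) :
    iidExpect p (fun ω => h₁ (ω t) * h₂ (ω s)) = (∑ j, p j * h₁ j) * ∑ j, p j * h₂ j := by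
  calc iidExpect p (fun ω => h₁ (ω t) * h₂ (ω s))
      = iidExpect p (fun ω => ∏ u, (if u = t then h₁ else if u = s then h₂ else 1) (ω u)) := by
        congr 1 with ω
        rw [Fintype.prod_eq_mul t s hts fun u hu => by simp [hu]]
        simp [hts.symm]
    _ = (∑ j, p j * h₁ j) * ∑ j, p j * h₂ j := by
        rw [iidExpect_prod, Fintype.prod_eq_mul t s hts fun u hu => by simp [hu, hp]]
        simp [hts.symm]

theorem iidExpect_sq_sum_of_centered (hp : ∑ j, p j = 1) (f : κ → ι → ℝ)
    (hf : ∀ t, ∑ j, p j * f t j = 0) :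
    iidExpect p (fun ω => (∑ t, f t (ω t)) ^ 2) = ∑ t, ∑ j, p j * f t j ^ 2 := by
  have hcov : ∀ t s, iidExpect p (fun ω => f t (ω t) * f s (ω s)) =
      if t = s then ∑ j, p j * f t j ^ 2 else 0 := by
    intro t s
    split_ifs with hts
    · subst hts
      simp_rw [← sq]
      exact iidExpect_apply hp (fun j => f t j ^ 2) t
    · rw [iidExpect_apply_mul_apply hp _ _ hts, hf, zero_mul]
  simp only [sq, Finset.sum_mul_sum, iidExpect_sum]
  simp [hcov, ← sq]

theorem sum_mul_sub_sq_eq (hp : ∑ j, p j = 1) (x : ι → ℝ) :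
    ∑ j, p j * (∑ i, p i * x i - x j) ^ 2 = ∑ j, p j * x j ^ 2 - (∑ i, p i * x i) ^ 2 := by
  set c := ∑ i, p i * x i
  have hexpand : ∀ j, p j * (c - x j) ^ 2 = c ^ 2 * p j - 2 * c * (p j * x j) + p j * x j ^ 2 :=
    fun j => by ring
  simp only [hexpand, Finset.sum_add_distrib, Finset.sum_sub_distrib, ← Finset.mul_sum, hp]
  ring

theorem iidExpect_sq_sum_sub_sum_inv_mul [Nonempty κ] (hp : ∑ j, p j = 1) (hp₀ : ∀ j, p j ≠ 0)
    (v : ι → ℝ) :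
    iidExpect p (fun ω : κ → ι =>
        (∑ j, v j - ∑ t, ((Fintype.card κ : ℝ) * p (ω t))⁻¹ * v (ω t)) ^ 2) =
      1 / Fintype.card κ * (∑ j, v j ^ 2 / p j - (∑ j, v j) ^ 2) := by
  have hg : (Fintype.card κ : ℝ) ≠ 0 := Nat.cast_ne_zero.mpr Fintype.card_ne_zero
  set g : ℝ := (Fintype.card κ : ℝ)
  set x : ι → ℝ := fun j => (g * p j)⁻¹ * v j
  have hmean : ∑ j, p j * x j = (∑ j, v j) / g := by
    rw [Finset.sum_div]
    refine Finset.sum_congr rfl fun j _ => ?_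
    simp only [x]
    field_simp [hp₀ j]
  have hsecond : ∑ j, p j * x j ^ 2 = (∑ j, v j ^ 2 / p j) / g ^ 2 := by
    rw [Finset.sum_div]
    refine Finset.sum_congr rfl fun j _ => ?_
    simp only [x]
    field_simp [hp₀ j]
  have hcentered : ∀ _ : κ, ∑ j, p j * (∑ i, p i * x i - x j) = 0 := by
    intro _
    simp only [mul_sub, Finset.sum_sub_distrib, ← Finset.sum_mul, hp, one_mul, sub_self]
  have hsplit : ∀ ω : κ → ι, ∑ j, v j - ∑ t, x (ω t) = ∑ t, (∑ i, p i * x i - x (ω t)) := by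
    intro ω
    rw [Finset.sum_sub_distrib, Finset.sum_const, Finset.card_univ, nsmul_eq_mul, hmean,
      mul_div_cancel₀ _ hg]
  calc iidExpect p (fun ω : κ → ι => (∑ j, v j - ∑ t, x (ω t)) ^ 2)
      = iidExpect p (fun ω : κ → ι => (∑ t, (∑ i, p i * x i - x (ω t))) ^ 2) := by
        simp only [hsplit]
    _ = g * (∑ j, p j * x j ^ 2 - (∑ i, p i * x i) ^ 2) := by
        rw [iidExpect_sq_sum_of_centered hp _ hcentered, sum_mul_sub_sq_eq hp, Finset.sum_const,
          Finset.card_univ, nsmul_eq_mul]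
    _ = 1 / g * (∑ j, v j ^ 2 / p j - (∑ j, v j) ^ 2) := by
        rw [hsecond, hmean]
        field_simp

theorem iidExpect_frobSq_sum_sub_sum_inv_smul {m q : Type*} [Fintype m] [Fintype q] [Nonempty κ]
    (hp : ∑ j, p j = 1) (hp₀ : ∀ j, p j ≠ 0) (M : ι → Matrix m q ℝ) :
    iidExpect p (fun ω : κ → ι =>
        frobSq (∑ j, M j - ∑ t, ((Fintype.card κ : ℝ) * p (ω t))⁻¹ • M (ω t))) =
      1 / Fintype.card κ * (∑ j, frobSq (M j) / p j - frobSq (∑ j, M j)) := by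
  have hentry : ∀ (ω : κ → ι) i k,
      (∑ j, M j - ∑ t, ((Fintype.card κ : ℝ) * p (ω t))⁻¹ • M (ω t)) i k =
        ∑ j, M j i k - ∑ t, ((Fintype.card κ : ℝ) * p (ω t))⁻¹ * M (ω t) i k := by
    simp [Matrix.sum_apply]
  simp only [frobSq, hentry, iidExpect_sum, iidExpect_sq_sum_sub_sum_inv_mul hp hp₀,
    Matrix.sum_apply]
  simp only [Finset.sum_div, ← Finset.mul_sum, Finset.sum_sub_distrib]
  congr 2
  conv_rhs => rw [Finset.sum_comm]
  exact Finset.sum_congr rfl fun _ _ => Finset.sum_comm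

end BlockSampling

/-- Expected squared Frobenius error of block sampling. -/
theorem block_sampling_expected_frobenius_error (m n q G g : ℕ) (hg : 0 < g)
    (s : Fin G → ℕ)
    (A : Matrix (Fin m) (Fin n) ℝ) (B : Matrix (Fin n) (Fin q) ℝ)
    (Ablk : (j : Fin G) → Matrix (Fin m) (Fin (s j)) ℝ)
    (Bblk : (j : Fin G) → Matrix (Fin (s j)) (Fin q) ℝ)
    (hAB : A * B = ∑ j : Fin G, Ablk j * Bblk j)
    (pr : Fin G → ℝ) (hpos : ∀ j, 0 < pr j) (hsum : ∑ j : Fin G, pr j = 1) :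
    ∑ ω : Fin g → Fin G, (∏ t, pr (ω t)) *
        frobSq (A * B - ∑ t, ((g : ℝ) * pr (ω t))⁻¹ • (Ablk (ω t) * Bblk (ω t)))
      = (1 / (g : ℝ)) *
        ((∑ j : Fin G, frobSq (Ablk j * Bblk j) / pr j) - frobSq (A * B)) := by
  have : Nonempty (Fin g) := Fin.pos_iff_nonempty.mp hg
  rw [hAB]
  simpa only [BlockSampling.iidExpect, Fintype.card_fin] using
    BlockSampling.iidExpect_frobSq_sum_sub_sum_inv_smul (κ := Fin g) hsum (fun j => (hpos j).ne')
      fun j => Ablk j * Bblk j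
end
end

section
/- Block stable rank bound on the sampling variance: if the sampling probabilities satisfy p_k ≥ β ||A^{(k)}||_F^2 / Σ_j ||A^{(j)}||_F^2 for all k, with β ∈ (0,1], and α_A = min_k ||A^{(k)}||_F^2 / ||A^{(k)}||_2^2, then E[||AB − CR||_F^2] ≤ ||A||_F^2 ||B||_F^2 / (β α_A g). -/
open Matrix Finset
open scoped Classical
noncomputable section
/-! Write the error `AB − CR` as `∑ₜ dₜ` with i.i.d. centred draws
`dₜ = AB/g − A⁽ʲᵗ⁾B₍ⱼₜ₎/(g p_{jₜ})`. Cross terms have zero expectation, so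
`E‖AB − CR‖_F² = g·E‖d‖_F² ≤ (1/g) ∑ₖ ‖A⁽ᵏ⁾B₍ₖ₎‖_F²/p_k`. Each summand is at most
`‖A⁽ᵏ⁾‖₂²‖B₍ₖ₎‖_F²/p_k ≤ ‖A⁽ᵏ⁾‖_F²‖B₍ₖ₎‖_F²/(α p_k) ≤ ‖A‖_F²‖B₍ₖ₎‖_F²/(αβ)`, and
`∑ₖ ‖B₍ₖ₎‖_F² = ‖B‖_F²`. -/

section Sampling

variable {ι κ : Type*} [Fintype ι] [DecidableEq ι] [Fintype κ] (p : κ → ℝ)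

theorem sum_prod_mul_prod_eq_pow (hp : ∑ j, p j = 1) (h : κ → ℝ) (T : Finset ι) :
    ∑ ω : ι → κ, (∏ s, p (ω s)) * ∏ s ∈ T, h (ω s) = (∑ j, p j * h j) ^ #T := by
  calc ∑ ω : ι → κ, (∏ s, p (ω s)) * ∏ s ∈ T, h (ω s)
      = ∑ ω : ι → κ, ∏ s, (p (ω s) * if s ∈ T then h (ω s) else 1) :=
        sum_congr rfl fun ω _ => by rw [prod_mul_distrib, prod_ite_mem, univ_inter]
    _ = ∏ s, ∑ j, (p j * if s ∈ T then h j else 1) :=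
        (Fintype.prod_sum fun s j => p j * if s ∈ T then h j else 1).symm
    _ = ∏ s, if s ∈ T then ∑ j, p j * h j else 1 :=
        prod_congr rfl fun s _ => by split_ifs <;> simp [hp]
    _ = (∑ j, p j * h j) ^ #T := by rw [prod_ite_mem, univ_inter, prod_const]

theorem sum_prod_mul_sum_sq_of_mean_zero (hp : ∑ j, p j = 1) (d : κ → ℝ)
    (hd : ∑ j, p j * d j = 0) :
    ∑ ω : ι → κ, (∏ s, p (ω s)) * (∑ s, d (ω s)) ^ 2
      = Fintype.card ι * ∑ j, p j * d j ^ 2 := by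
  have hpair : ∀ s s' : ι, ∑ ω : ι → κ, (∏ r, p (ω r)) * (d (ω s) * d (ω s'))
      = if s = s' then ∑ j, p j * d j ^ 2 else 0 := by
    intro s s'
    by_cases hss : s = s'
    · subst hss
      simpa [← sq] using sum_prod_mul_prod_eq_pow p hp (fun j => d j ^ 2) {s}
    · simpa [prod_pair hss, card_pair hss, hd, hss] using
        sum_prod_mul_prod_eq_pow p hp d {s, s'}
  calc ∑ ω : ι → κ, (∏ s, p (ω s)) * (∑ s, d (ω s)) ^ 2
      = ∑ s, ∑ s', ∑ ω : ι → κ, (∏ r, p (ω r)) * (d (ω s) * d (ω s')) := by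
        simp_rw [sq, sum_mul_sum, mul_sum]
        rw [sum_comm]
        exact sum_congr rfl fun s _ => sum_comm
    _ = Fintype.card ι * ∑ j, p j * d j ^ 2 := by simp [hpair]

theorem sum_mul_sub_sq_eq (hp : ∑ j, p j = 1) (c : κ → ℝ) :
    ∑ j, p j * (∑ i, p i * c i - c j) ^ 2 = ∑ j, p j * c j ^ 2 - (∑ j, p j * c j) ^ 2 := by
  set a := ∑ i, p i * c i
  calc ∑ j, p j * (a - c j) ^ 2 = ∑ j, (a ^ 2 * p j - 2 * a * (p j * c j) + p j * c j ^ 2) :=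
        sum_congr rfl fun j _ => by ring
    _ = a ^ 2 * ∑ j, p j - 2 * a * a + ∑ j, p j * c j ^ 2 := by
        rw [sum_add_distrib, sum_sub_distrib, ← mul_sum, ← mul_sum]
    _ = ∑ j, p j * c j ^ 2 - a ^ 2 := by rw [hp]; ring

theorem sum_prod_mul_sampling_error_sq_le [Nonempty ι] (hpos : ∀ j, 0 < p j)
    (hp : ∑ j, p j = 1) (f : κ → ℝ) :
    ∑ ω : ι → κ, (∏ s, p (ω s)) *
        (∑ j, f j - ∑ s, ((Fintype.card ι : ℝ) * p (ω s))⁻¹ * f (ω s)) ^ 2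
      ≤ (∑ j, f j ^ 2 / p j) / Fintype.card ι := by
  set g : ℝ := (Fintype.card ι : ℝ)
  have hg : 0 < g := Nat.cast_pos.mpr Fintype.card_pos
  set c : κ → ℝ := fun j => (g * p j)⁻¹ * f j
  have hmean : ∑ j, p j * c j = (∑ j, f j) / g := by
    rw [sum_div]
    exact sum_congr rfl fun j _ => by simp only [c]; field_simp [(hpos j).ne']
  have hsecond : ∑ j, p j * c j ^ 2 = (∑ j, f j ^ 2 / p j) / g ^ 2 := by
    rw [sum_div]
    exact sum_congr rfl fun j _ => by simp only [c]; field_simp [(hpos j).ne']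
  have herror : ∀ ω : ι → κ, ∑ j, f j - ∑ s, c (ω s) = ∑ s, (∑ j, p j * c j - c (ω s)) := by
    intro ω
    rw [sum_sub_distrib, sum_const, card_univ, hmean, nsmul_eq_mul,
      show ((Fintype.card ι : ℕ) : ℝ) = g from rfl]
    field_simp
  have hcentered : ∑ j, p j * (∑ i, p i * c i - c j) = 0 := by
    simp_rw [mul_sub, sum_sub_distrib, ← sum_mul, hp, one_mul, sub_self]
  calc ∑ ω : ι → κ, (∏ s, p (ω s)) * (∑ j, f j - ∑ s, c (ω s)) ^ 2
      = g * (∑ j, p j * c j ^ 2 - (∑ j, p j * c j) ^ 2) := by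
        simp_rw [herror]
        rw [sum_prod_mul_sum_sq_of_mean_zero p hp _ hcentered, sum_mul_sub_sq_eq p hp]
    _ ≤ g * ∑ j, p j * c j ^ 2 := by gcongr; exact sub_le_self _ (sq_nonneg _)
    _ = (∑ j, f j ^ 2 / p j) / g := by rw [hsecond]; field_simp

theorem sum_prod_mul_frobSq_sampling_error_le [Nonempty ι] {m n : Type*} [Fintype m] [Fintype n]
    (hpos : ∀ j, 0 < p j) (hp : ∑ j, p j = 1) (X : κ → Matrix m n ℝ) :
    ∑ ω : ι → κ, (∏ s, p (ω s)) *
        frobSq (∑ j, X j - ∑ s, ((Fintype.card ι : ℝ) * p (ω s))⁻¹ • X (ω s))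
      ≤ (∑ j, frobSq (X j) / p j) / Fintype.card ι := by
  set g : ℝ := (Fintype.card ι : ℝ)
  calc ∑ ω : ι → κ, (∏ s, p (ω s)) * frobSq (∑ j, X j - ∑ s, (g * p (ω s))⁻¹ • X (ω s))
      = ∑ a, ∑ b, ∑ ω : ι → κ, (∏ s, p (ω s)) *
          (∑ j, X j a b - ∑ s, (g * p (ω s))⁻¹ * X (ω s) a b) ^ 2 := by
        simp only [frobSq, Matrix.sub_apply, Matrix.sum_apply, Matrix.smul_apply, smul_eq_mul,
          mul_sum]
        rw [sum_comm]
        exact sum_congr rfl fun a _ => sum_comm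
    _ ≤ ∑ a, ∑ b, (∑ j, X j a b ^ 2 / p j) / g := by
        gcongr with a _ b _
        exact sum_prod_mul_sampling_error_sq_le p hpos hp fun j => X j a b
    _ = (∑ j, frobSq (X j) / p j) / g := by
        simp only [frobSq, sum_div]
        exact (sum_congr rfl fun _ _ => sum_comm).trans sum_comm

end Sampling

section Norms

variable {m n q : Type*} [Fintype m] [Fintype n] [Fintype q]

theorem frobSq_nonneg (A : Matrix m n ℝ) : 0 ≤ frobSq A :=
  sum_nonneg fun _ _ => sum_nonneg fun _ _ => sq_nonneg _

theorem frobSq_pos {A : Matrix m n ℝ} (hA : A ≠ 0) : 0 < frobSq A := by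
  obtain ⟨i, j, hij⟩ : ∃ i j, A i j ≠ 0 := by
    by_contra! h
    exact hA (Matrix.ext h)
  exact sum_pos' (fun _ _ => sum_nonneg fun _ _ => sq_nonneg _)
    ⟨i, mem_univ _, sum_pos' (fun _ _ => sq_nonneg _) ⟨j, mem_univ _, by positivity⟩⟩

variable [DecidableEq n]

theorem specNorm_pos {A : Matrix m n ℝ} (hA : A ≠ 0) : 0 < specNorm A :=
  norm_pos_iff.mpr <| (LinearMap.toContinuousLinearMap.map_ne_zero_iff).mpr <|
    Matrix.toEuclideanLin.map_ne_zero_iff.mpr hA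

theorem sum_sq_mulVec_le (A : Matrix m n ℝ) (v : n → ℝ) :
    ∑ i, (A *ᵥ v) i ^ 2 ≤ specNorm A ^ 2 * ∑ j, v j ^ 2 := by
  set T := LinearMap.toContinuousLinearMap (Matrix.toEuclideanLin A)
  calc ∑ i, (A *ᵥ v) i ^ 2 = ‖T (WithLp.toLp 2 v)‖ ^ 2 := by
        rw [EuclideanSpace.real_norm_sq_eq]; rfl
    _ ≤ (‖T‖ * ‖WithLp.toLp 2 v‖) ^ 2 := by gcongr; exact T.le_opNorm _
    _ = specNorm A ^ 2 * ∑ j, v j ^ 2 := by rw [mul_pow, EuclideanSpace.real_norm_sq_eq]; rfl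

theorem frobSq_mul_le (A : Matrix m n ℝ) (B : Matrix n q ℝ) :
    frobSq (A * B) ≤ specNorm A ^ 2 * frobSq B := by
  calc frobSq (A * B) = ∑ l, ∑ i, (A *ᵥ fun k => B k l) i ^ 2 := sum_comm
    _ ≤ ∑ l, specNorm A ^ 2 * ∑ k, B k l ^ 2 :=
        sum_le_sum fun l _ => sum_sq_mulVec_le A fun k => B k l
    _ = specNorm A ^ 2 * frobSq B := by rw [← mul_sum, frobSq, sum_comm]

theorem frobSq_mul_div_le {A : Matrix m n ℝ} (B : Matrix n q ℝ) {p α β F : ℝ} (hp : 0 < p)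
    (hα : 0 < α) (hβ : 0 < β) (hαA : α ≤ frobSq A / specNorm A ^ 2)
    (hpA : β * frobSq A ≤ p * F) :
    frobSq (A * B) / p ≤ F * frobSq B / (β * α) := by
  have hspec : α * specNorm A ^ 2 ≤ frobSq A := by
    rcases (sq_nonneg (specNorm A)).eq_or_lt with h0 | h0
    · rw [← h0, mul_zero]
      exact frobSq_nonneg A
    · exact (le_div_iff₀ h0).mp hαA
  have hB := frobSq_nonneg B
  rw [div_le_div_iff₀ hp (by positivity)]
  calc frobSq (A * B) * (β * α) ≤ specNorm A ^ 2 * frobSq B * (β * α) := by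
        gcongr; exact frobSq_mul_le A B
    _ = β * (α * specNorm A ^ 2) * frobSq B := by ring
    _ ≤ β * frobSq A * frobSq B := by gcongr
    _ ≤ p * F * frobSq B := by gcongr
    _ = F * frobSq B * p := by ring

end Norms

theorem block_stable_rank_variance_bound_general (m n q G g : ℕ) (hg : 0 < g)
    (s : Fin G → ℕ)
    (A : Matrix (Fin m) (Fin n) ℝ) (B : Matrix (Fin n) (Fin q) ℝ)
    (Ablk : (j : Fin G) → Matrix (Fin m) (Fin (s j)) ℝ)
    (Bblk : (j : Fin G) → Matrix (Fin (s j)) (Fin q) ℝ)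
    (hAB : A * B = ∑ j : Fin G, Ablk j * Bblk j)
    (hA : frobSq A = ∑ j : Fin G, frobSq (Ablk j))
    (hB : frobSq B = ∑ j : Fin G, frobSq (Bblk j))
    (hAne : ∀ j, Ablk j ≠ 0)
    (pr : Fin G → ℝ) (hpos : ∀ j, 0 < pr j) (hsum : ∑ j : Fin G, pr j = 1)
    (β : ℝ) (hβ : 0 < β)
    (hp : ∀ j, β * (frobSq (Ablk j) / ∑ i : Fin G, frobSq (Ablk i)) ≤ pr j)
    (hne : (Finset.univ : Finset (Fin G)).Nonempty)
    (α : ℝ) (hα : α = Finset.univ.inf' hne (fun j => frobSq (Ablk j) / (specNorm (Ablk j))^2)) :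
    ∑ ω : Fin g → Fin G, (∏ t, pr (ω t)) *
        frobSq (A * B - ∑ t, ((g : ℝ) * pr (ω t))⁻¹ • (Ablk (ω t) * Bblk (ω t)))
      ≤ frobSq A * frobSq B / (β * α * (g : ℝ)) := by
  have hAblk : ∀ j, 0 < frobSq (Ablk j) := fun j => frobSq_pos (hAne j)
  have hα_pos : 0 < α := hα ▸ (lt_inf'_iff hne).mpr fun j _ =>
    div_pos (hAblk j) (pow_pos (specNorm_pos (hAne j)) 2)
  have hA_pos : 0 < frobSq A := hA ▸ sum_pos (fun j _ => hAblk j) hne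
  have hblock : ∀ j, frobSq (Ablk j * Bblk j) / pr j ≤ frobSq A * frobSq (Bblk j) / (β * α) := by
    intro j
    refine frobSq_mul_div_le _ (hpos j) hα_pos hβ (hα ▸ inf'_le _ (mem_univ j)) ?_
    have hpj := hp j
    rwa [← hA, mul_div_assoc', div_le_iff₀ hA_pos] at hpj
  have : NeZero g := ⟨hg.ne'⟩
  have hsample := sum_prod_mul_frobSq_sampling_error_le (ι := Fin g) pr hpos hsum
    fun j => Ablk j * Bblk j
  rw [Fintype.card_fin] at hsample
  calc _ ≤ (∑ j, frobSq (Ablk j * Bblk j) / pr j) / g := by rw [hAB]; exact hsample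
    _ ≤ (∑ j, frobSq A * frobSq (Bblk j) / (β * α)) / g :=
        div_le_div_of_nonneg_right (sum_le_sum fun j _ => hblock j) (Nat.cast_nonneg g)
    _ = frobSq A * frobSq B / (β * α * g) := by rw [← sum_div, ← mul_sum, ← hB, div_div]

/-- Block stable rank bound on the sampling variance. -/
theorem block_stable_rank_variance_bound (m n q G g : ℕ) (hg : 0 < g)
    (s : Fin G → ℕ)
    (A : Matrix (Fin m) (Fin n) ℝ) (B : Matrix (Fin n) (Fin q) ℝ)
    (Ablk : (j : Fin G) → Matrix (Fin m) (Fin (s j)) ℝ)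
    (Bblk : (j : Fin G) → Matrix (Fin (s j)) (Fin q) ℝ)
    (hAB : A * B = ∑ j : Fin G, Ablk j * Bblk j)
    (hA : frobSq A = ∑ j : Fin G, frobSq (Ablk j))
    (hB : frobSq B = ∑ j : Fin G, frobSq (Bblk j))
    (hAne : ∀ j, Ablk j ≠ 0)
    (pr : Fin G → ℝ) (hpos : ∀ j, 0 < pr j) (hsum : ∑ j : Fin G, pr j = 1)
    (β : ℝ) (hβ : 0 < β) (hβ1 : β ≤ 1)
    (hp : ∀ j, β * (frobSq (Ablk j) / ∑ i : Fin G, frobSq (Ablk i)) ≤ pr j)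
    (hne : (Finset.univ : Finset (Fin G)).Nonempty)
    (α : ℝ) (hα : α = Finset.univ.inf' hne (fun j => frobSq (Ablk j) / (specNorm (Ablk j))^2)) :
    ∑ ω : Fin g → Fin G, (∏ t, pr (ω t)) *
        frobSq (A * B - ∑ t, ((g : ℝ) * pr (ω t))⁻¹ • (Ablk (ω t) * Bblk (ω t)))
      ≤ frobSq A * frobSq B / (β * α * (g : ℝ)) :=
  block_stable_rank_variance_bound_general m n q G g hg s A B Ablk Bblk hAB hA hB hAne pr hpos hsum
    β hβ hp hne α hα
end
end

section
/- Pseudoinverse perturbation bound: if M ∈ ℝ^{k×c} has full row rank k and all singular values satisfy |σ_i(M)^2 − 1| ≤ ε for some 0 ≤ ε < 1, then ||M^† − M^T||_2 = max_i |σ_i(M) − 1/σ_i(M)| ≤ ε / sqrt(1 − ε). -/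
open Matrix Finset
open scoped Classical
noncomputable section
/-! The eigenvalues `dᵢ` of `H = M Mᵀ` lie in `[1 - ε, 1 + ε]`, so `H` is invertible and the Penrose
conditions force `P = Mᵀ H⁻¹`. Then `(P - Mᵀ)ᵀ (P - Mᵀ) = H⁻¹ + H - 2` is a function of `H`, so the
C*-identity and the spectral theorem give `‖P - Mᵀ‖² = maxᵢ |dᵢ⁻¹ + dᵢ - 2| = maxᵢ (√dᵢ - 1/√dᵢ)²`.
Finally `|√d - 1/√d| = |d - 1| / √d ≤ ε / √(1 - ε)`. -/

open scoped Matrix.Norms.L2Operator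

theorem Pi.norm_eq_sup'_abs {ι : Type*} [Fintype ι] (h : (univ : Finset ι).Nonempty) (v : ι → ℝ) :
    ‖v‖ = univ.sup' h (fun i => |v i|) :=
  le_antisymm
    ((pi_norm_le_iff_of_nonneg ((abs_nonneg _).trans (le_sup' (fun i => |v i|) h.choose_spec))).2
      fun i => le_sup' (fun i => |v i|) (mem_univ i))
    (sup'_le _ _ fun i _ => norm_le_pi_norm v i)

theorem Matrix.IsHermitian.l2_opNorm_cfc {n 𝕜 : Type*} [RCLike 𝕜] [Fintype n] [DecidableEq n]
    {A : Matrix n n 𝕜} (hA : A.IsHermitian) (f : ℝ → ℝ) :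
    ‖cfc f A‖ = ‖f ∘ hA.eigenvalues‖ := by
  rw [hA.cfc_eq, IsHermitian.cfc, Unitary.conjStarAlgAut_apply, ← Unitary.coe_star,
    CStarRing.norm_mul_coe_unitary, CStarRing.norm_coe_unitary_mul, l2_opNorm_diagonal]
  simp [Pi.norm_def]

theorem IsPinv.eq_transpose_mul_inv {m n : Type*} [Fintype m] [Fintype n] [DecidableEq m]
    {M : Matrix m n ℝ} {P : Matrix n m ℝ} (hP : IsPinv M P) (hM : IsUnit (M * Mᵀ).det) :
    P = Mᵀ * (M * Mᵀ)⁻¹ := by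
  obtain ⟨hMPM, -, -, hPM⟩ := hP
  have hMP : M * P = 1 := by
    calc M * P = M * P * (M * Mᵀ) * (M * Mᵀ)⁻¹ := (mul_nonsing_inv_cancel_right _ _ hM).symm
      _ = M * Mᵀ * (M * Mᵀ)⁻¹ := by rw [← Matrix.mul_assoc, hMPM]
      _ = 1 := mul_nonsing_inv _ hM
  have hPH : P * (M * Mᵀ) = Mᵀ := by
    rw [← Matrix.mul_assoc, ← hPM, transpose_mul, Matrix.mul_assoc, ← transpose_mul, hMP,
      transpose_one, Matrix.mul_one]
  calc P = P * (M * Mᵀ) * (M * Mᵀ)⁻¹ := (mul_nonsing_inv_cancel_right _ _ hM).symm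
    _ = Mᵀ * (M * Mᵀ)⁻¹ := by rw [hPH]

theorem IsPinv.transpose_mul_sub_transpose {m n : Type*} [Fintype m] [Fintype n] [DecidableEq m]
    {M : Matrix m n ℝ} {P : Matrix n m ℝ} (hP : IsPinv M P) (hM : IsUnit (M * Mᵀ).det) :
    (P - Mᵀ)ᵀ * (P - Mᵀ) = (M * Mᵀ)⁻¹ + M * Mᵀ - 2 := by
  set H := M * Mᵀ with hH
  have hsymm : H⁻¹ᵀ = H⁻¹ := by rw [transpose_nonsing_inv, hH, transpose_mul, transpose_transpose]
  have hsub : P - Mᵀ = Mᵀ * (H⁻¹ - 1) := by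
    rw [hP.eq_transpose_mul_inv hM, Matrix.mul_sub, Matrix.mul_one]
  calc (P - Mᵀ)ᵀ * (P - Mᵀ) = (H⁻¹ - 1) * H * (H⁻¹ - 1) := by
        rw [hsub, transpose_mul, transpose_sub, hsymm, transpose_one, transpose_transpose, hH,
          Matrix.mul_assoc, Matrix.mul_assoc, Matrix.mul_assoc]
    _ = H⁻¹ * H * H⁻¹ - H⁻¹ * H - H * H⁻¹ + H := by noncomm_ring
    _ = H⁻¹ + H - 2 := by
      rw [nonsing_inv_mul _ hM, mul_nonsing_inv _ hM, Matrix.one_mul, ← one_add_one_eq_two]; abel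

theorem Matrix.IsHermitian.cfc_inv_add_sub_two {n 𝕜 : Type*} [RCLike 𝕜] [Fintype n] [DecidableEq n]
    {A : Matrix n n 𝕜} (hA : A.IsHermitian) (hdet : IsUnit A.det) :
    cfc (fun x : ℝ => x⁻¹ + x - 2) A = A⁻¹ + A - 2 := by
  have hunit : IsUnit A := (isUnit_iff_isUnit_det A).2 hdet
  have hinv : ContinuousOn (fun x : ℝ => x⁻¹) (spectrum ℝ A) :=
    continuousOn_inv₀.mono fun x hx (h0 : x = 0) => spectrum.zero_notMem ℝ hunit (h0 ▸ hx)
  rw [cfc_sub (fun x : ℝ => x⁻¹ + x) (fun _ => 2) A (hinv.add continuousOn_id),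
    cfc_add A (fun x : ℝ => x⁻¹) (fun x => x) hinv, cfc_ringInverse_id A hunit, cfc_id' ℝ A,
    cfc_const (2 : ℝ) A, nonsing_inv_eq_ringInverse, map_ofNat]

theorem Real.inv_add_sub_two_eq_sq {x : ℝ} (hx : 0 < x) : x⁻¹ + x - 2 = (√x - 1 / √x) ^ 2 := by
  field_simp
  rw [Real.sq_sqrt hx.le]
  ring

theorem Real.abs_sqrt_sub_one_div_sqrt_le {x ε : ℝ} (hx : |x - 1| ≤ ε) (hε : ε < 1) :
    |√x - 1 / √x| ≤ ε / √(1 - ε) := by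
  have hlow : 1 - ε ≤ x := by linarith [(abs_le.1 hx).1]
  have hpos : 0 < √(1 - ε) := Real.sqrt_pos.2 (by linarith)
  have hs : 0 < √x := hpos.trans_le (Real.sqrt_le_sqrt hlow)
  have hdiff : √x - 1 / √x = (x - 1) / √x := by
    field_simp
    rw [Real.sq_sqrt (by linarith)]
  rw [hdiff, abs_div, abs_of_pos hs]
  exact div_le_div₀ ((abs_nonneg _).trans hx) hx hpos (Real.sqrt_le_sqrt hlow)

theorem IsPinv.l2_opNorm_sub_transpose {m n : Type*} [Fintype m] [Fintype n] [DecidableEq m]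
    {M : Matrix m n ℝ} {P : Matrix n m ℝ} (hP : IsPinv M P)
    (hpos : ∀ i, 0 < (isHermitian_mul_conjTranspose_self M).eigenvalues i)
    (h : (univ : Finset m).Nonempty) :
    ‖P - Mᵀ‖ = univ.sup' h fun i =>
      |√((isHermitian_mul_conjTranspose_self M).eigenvalues i)
        - 1 / √((isHermitian_mul_conjTranspose_self M).eigenvalues i)| := by
  set hH := isHermitian_mul_conjTranspose_self M
  have hMH : Mᴴ = Mᵀ := conjTranspose_eq_transpose_of_trivial M
  have hdet : IsUnit (M * Mᵀ).det := by
    rw [← hMH, hH.det_eq_prod_eigenvalues]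
    exact isUnit_iff_ne_zero.2 (prod_ne_zero_iff.2 fun i _ => (hpos i).ne')
  calc ‖P - Mᵀ‖ = √(‖P - Mᵀ‖ * ‖P - Mᵀ‖) := (Real.sqrt_mul_self (norm_nonneg _)).symm
    _ = √‖(fun x : ℝ => x⁻¹ + x - 2) ∘ hH.eigenvalues‖ := by
      rw [← l2_opNorm_conjTranspose_mul_self, conjTranspose_eq_transpose_of_trivial,
        hP.transpose_mul_sub_transpose hdet, ← hMH, ← hH.cfc_inv_add_sub_two (hMH ▸ hdet),
        hH.l2_opNorm_cfc]
    _ = univ.sup' h fun i => √|(hH.eigenvalues i)⁻¹ + hH.eigenvalues i - 2| := by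
      rw [Pi.norm_eq_sup'_abs h, apply_sup'_eq_sup'_comp h Real.sqrt Real.sqrt_monotone.map_sup]
      rfl
    _ = _ := sup'_congr h rfl fun i _ => by
      rw [Real.inv_add_sub_two_eq_sq (hpos i), abs_sq, Real.sqrt_sq_eq_abs]

theorem pseudoinverse_perturbation_general (k c : ℕ) (hk : 0 < k)
    (M : Matrix (Fin k) (Fin c) ℝ)
    (P : Matrix (Fin c) (Fin k) ℝ) (hP : IsPinv M P)
    (ε : ℝ) (hε1 : ε < 1)
    (hσ : ∀ i : Fin k,
      |(Matrix.isHermitian_mul_conjTranspose_self M).eigenvalues i - 1| ≤ ε) :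
    specNorm (P - Mᵀ)
        = Finset.univ.sup' (Finset.univ_nonempty_iff.mpr (Fin.pos_iff_nonempty.mp hk))
            (fun i : Fin k =>
              |Real.sqrt ((Matrix.isHermitian_mul_conjTranspose_self M).eigenvalues i)
                - 1 / Real.sqrt ((Matrix.isHermitian_mul_conjTranspose_self M).eigenvalues i)|) ∧
    Finset.univ.sup' (Finset.univ_nonempty_iff.mpr (Fin.pos_iff_nonempty.mp hk))
        (fun i : Fin k =>
          |Real.sqrt ((Matrix.isHermitian_mul_conjTranspose_self M).eigenvalues i)
            - 1 / Real.sqrt ((Matrix.isHermitian_mul_conjTranspose_self M).eigenvalues i)|)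
      ≤ ε / Real.sqrt (1 - ε) := by
  have hpos : ∀ i, 0 < (isHermitian_mul_conjTranspose_self M).eigenvalues i := fun i => by
    linarith [(abs_le.1 (hσ i)).1]
  exact ⟨hP.l2_opNorm_sub_transpose hpos _,
    sup'_le _ _ fun i _ => Real.abs_sqrt_sub_one_div_sqrt_le (hσ i) hε1⟩

/-- Pseudoinverse perturbation bound. -/
theorem pseudoinverse_perturbation (k c : ℕ) (hk : 0 < k)
    (M : Matrix (Fin k) (Fin c) ℝ) (hrank : M.rank = k)
    (P : Matrix (Fin c) (Fin k) ℝ) (hP : IsPinv M P)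
    (ε : ℝ) (hε0 : 0 ≤ ε) (hε1 : ε < 1)
    (hσ : ∀ i : Fin k,
      |(Matrix.isHermitian_mul_conjTranspose_self M).eigenvalues i - 1| ≤ ε) :
    specNorm (P - Mᵀ)
        = Finset.univ.sup' (Finset.univ_nonempty_iff.mpr (Fin.pos_iff_nonempty.mp hk))
            (fun i : Fin k =>
              |Real.sqrt ((Matrix.isHermitian_mul_conjTranspose_self M).eigenvalues i)
                - 1 / Real.sqrt ((Matrix.isHermitian_mul_conjTranspose_self M).eigenvalues i)|) ∧
    Finset.univ.sup' (Finset.univ_nonempty_iff.mpr (Fin.pos_iff_nonempty.mp hk))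
        (fun i : Fin k =>
          |Real.sqrt ((Matrix.isHermitian_mul_conjTranspose_self M).eigenvalues i)
            - 1 / Real.sqrt ((Matrix.isHermitian_mul_conjTranspose_self M).eigenvalues i)|)
      ≤ ε / Real.sqrt (1 - ε) :=
  pseudoinverse_perturbation_general k c hk M P hP ε hε1 hσ
end
end

section
/- Pseudoinverse composition identity for Block CUR: let B ∈ ℝ^{r×n} have SVD B = U_k Σ_k V_k^T with Σ_k ∈ ℝ^{k×k} invertible (rank(B) = k), and let S ∈ ℝ^{n×c} be such that V_k^T S has full row rank k. Then (B S)^† = (V_k^T S)^† Σ_k^{-1} U_k^T, and consequently A S (B S)^† B = A S (V_k^T S)^† V_k^T for any A ∈ ℝ^{m×n}. -/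
open Matrix Finset
open scoped Classical
noncomputable section
/-! Write `B S = U (D M)` with `M = Vᵀ S` and `D` the diagonal of singular values. Since `M` has
full row rank, `M Q = 1`, so the invertible factor `D` can be absorbed as `Q D⁻¹`, and the
orthonormal columns of `U` are undone by `Uᵀ`: the candidate `Q D⁻¹ Uᵀ` satisfies the four
Penrose conditions for `B S`, hence equals `P` by uniqueness. The second identity then follows by
cancelling `Uᵀ U` and `D⁻¹ D`. -/

namespace IsPinv

variable {m n p : Type*} [Fintype m] [Fintype n] [Fintype p]

theorem transpose {M : Matrix m n ℝ} {P : Matrix n m ℝ} (hP : IsPinv M P) :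
    IsPinv Mᵀ Pᵀ := by
  obtain ⟨h₁, h₂, h₃, h₄⟩ := hP
  refine ⟨?_, ?_, ?_, ?_⟩
  · rw [← transpose_mul, ← transpose_mul, ← Matrix.mul_assoc, h₁]
  · rw [← transpose_mul, ← transpose_mul, ← Matrix.mul_assoc, h₂]
  · rw [← transpose_mul, transpose_transpose, h₄]
  · rw [← transpose_mul, transpose_transpose, h₃]

theorem eq_mul_mul {M : Matrix m n ℝ} {P P' : Matrix n m ℝ} (hP : IsPinv M P)
    (hP' : IsPinv M P') : P = P * M * P' := by
  obtain ⟨-, h₂, h₃, -⟩ := hP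
  obtain ⟨h₁', -, h₃', -⟩ := hP'
  calc P = P * (M * P)ᵀ := by rw [h₃, ← Matrix.mul_assoc, h₂]
    _ = P * ((M * P') * (M * P))ᵀ := by rw [← Matrix.mul_assoc, h₁']
    _ = P * M * P * M * P' := by rw [transpose_mul, h₃, h₃']; simp only [Matrix.mul_assoc]
    _ = P * M * P' := by rw [h₂]

theorem unique {M : Matrix m n ℝ} {P P' : Matrix n m ℝ} (hP : IsPinv M P) (hP' : IsPinv M P') :
    P = P' := by
  have h : P'ᵀ = P'ᵀ * Mᵀ * Pᵀ := hP'.transpose.eq_mul_mul hP.transpose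
  rw [← transpose_mul, ← transpose_mul, transpose_inj, ← Matrix.mul_assoc] at h
  rw [hP.eq_mul_mul hP', ← h]

theorem mul_left_of_transpose_mul_self [DecidableEq m] {M : Matrix m n ℝ} {Q : Matrix n m ℝ}
    (hQ : IsPinv M Q) {U : Matrix p m ℝ} (hU : Uᵀ * U = 1) : IsPinv (U * M) (Q * Uᵀ) := by
  obtain ⟨h₁, h₂, h₃, h₄⟩ := hQ
  have hUMQ : U * M * (Q * Uᵀ) = U * (M * Q) * Uᵀ := by simp only [Matrix.mul_assoc]
  have hQUM : Q * Uᵀ * (U * M) = Q * M := by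
    rw [Matrix.mul_assoc, ← Matrix.mul_assoc Uᵀ, hU, Matrix.one_mul]
  refine ⟨?_, ?_, ?_, ?_⟩
  · rw [Matrix.mul_assoc, hQUM, Matrix.mul_assoc, ← Matrix.mul_assoc M, h₁]
  · rw [hQUM, ← Matrix.mul_assoc, h₂]
  · rw [hUMQ, transpose_mul, transpose_mul, transpose_transpose, h₃]
    simp only [Matrix.mul_assoc]
  · rw [hQUM, h₄]

theorem mul_left_of_isUnit_det [DecidableEq m] {M : Matrix m n ℝ} {Q : Matrix n m ℝ}
    (hQ : IsPinv M Q) (hMQ : M * Q = 1) {D : Matrix m m ℝ} (hD : IsUnit D.det) :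
    IsPinv (D * M) (Q * D⁻¹) := by
  obtain ⟨-, h₂, -, h₄⟩ := hQ
  have hDMQ : D * M * (Q * D⁻¹) = 1 := by
    rw [Matrix.mul_assoc, ← Matrix.mul_assoc M, hMQ, Matrix.one_mul, mul_nonsing_inv _ hD]
  have hQDM : Q * D⁻¹ * (D * M) = Q * M := by
    rw [Matrix.mul_assoc, nonsing_inv_mul_cancel_left _ _ hD]
  refine ⟨?_, ?_, ?_, ?_⟩
  · rw [hDMQ, Matrix.one_mul]
  · rw [hQDM, ← Matrix.mul_assoc, h₂]
  · rw [hDMQ, transpose_one]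
  · rw [hQDM, h₄]

theorem mul_eq_one_of_rank_eq [DecidableEq m] {M : Matrix m n ℝ} {Q : Matrix n m ℝ}
    (hQ : IsPinv M Q) (hM : M.rank = Fintype.card m) : M * Q = 1 := by
  have hsurj : Function.Surjective M.mulVecLin := by
    rw [← LinearMap.range_eq_top]
    apply Submodule.eq_top_of_finrank_eq
    rw [← Matrix.rank, hM, Module.finrank_fintype_fun_eq_card]
  refine Matrix.toLin'.injective (LinearMap.ext fun v => ?_)
  obtain ⟨w, rfl⟩ := hsurj v
  rw [toLin'_one, LinearMap.id_apply, toLin'_apply, mulVecLin_apply, mulVec_mulVec, hQ.1]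

end IsPinv

theorem pinv_composition_block_cur_general (m r n c k : ℕ)
    (B : Matrix (Fin r) (Fin n) ℝ)
    (U : Matrix (Fin r) (Fin k) ℝ) (hU : Uᵀ * U = 1)
    (V : Matrix (Fin n) (Fin k) ℝ)
    (d : Fin k → ℝ) (hd : ∀ i, 0 < d i)
    (hB : B = U * Matrix.diagonal d * Vᵀ)
    (S : Matrix (Fin n) (Fin c) ℝ) (hrank : (Vᵀ * S).rank = k)
    (P : Matrix (Fin c) (Fin r) ℝ) (hP : IsPinv (B * S) P)
    (Q : Matrix (Fin c) (Fin k) ℝ) (hQ : IsPinv (Vᵀ * S) Q)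
    (A : Matrix (Fin m) (Fin n) ℝ) :
    P = Q * (Matrix.diagonal d)⁻¹ * Uᵀ ∧
    A * S * P * B = A * S * Q * Vᵀ := by
  set D := Matrix.diagonal d
  have hD : IsUnit D.det := by
    rw [det_diagonal]
    exact (prod_pos fun i _ => hd i).ne'.isUnit
  have hMQ : Vᵀ * S * Q = 1 := hQ.mul_eq_one_of_rank_eq (by rw [hrank, Fintype.card_fin])
  have hBS : B * S = U * (D * (Vᵀ * S)) := by
    rw [hB]
    simp only [Matrix.mul_assoc]
  have hPQ : P = Q * D⁻¹ * Uᵀ := by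
    refine hP.unique ?_
    rw [hBS]
    exact (hQ.mul_left_of_isUnit_det hMQ hD).mul_left_of_transpose_mul_self hU
  refine ⟨hPQ, ?_⟩
  calc A * S * P * B = A * S * Q * (D⁻¹ * ((Uᵀ * U) * D)) * Vᵀ := by
        rw [hPQ, hB]
        simp only [Matrix.mul_assoc]
    _ = A * S * Q * Vᵀ := by
        rw [hU, Matrix.one_mul, nonsing_inv_mul _ hD, Matrix.mul_one]

/-- Pseudoinverse composition identity for Block CUR. -/
theorem pinv_composition_block_cur (m r n c k : ℕ)
    (B : Matrix (Fin r) (Fin n) ℝ)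
    (U : Matrix (Fin r) (Fin k) ℝ) (hU : Uᵀ * U = 1)
    (V : Matrix (Fin n) (Fin k) ℝ) (hV : Vᵀ * V = 1)
    (d : Fin k → ℝ) (hd : ∀ i, 0 < d i)
    (hB : B = U * Matrix.diagonal d * Vᵀ)
    (S : Matrix (Fin n) (Fin c) ℝ) (hrank : (Vᵀ * S).rank = k)
    (P : Matrix (Fin c) (Fin r) ℝ) (hP : IsPinv (B * S) P)
    (Q : Matrix (Fin c) (Fin k) ℝ) (hQ : IsPinv (Vᵀ * S) Q)
    (A : Matrix (Fin m) (Fin n) ℝ) :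
    P = Q * (Matrix.diagonal d)⁻¹ * Uᵀ ∧
    A * S * P * B = A * S * Q * Vᵀ :=
  pinv_composition_block_cur_general m r n c k B U hU V d hd hB S hrank P hP Q hQ A
end
end

section
/- Deterministic structural bound for subsampled regression: let B ∈ ℝ^{r×n} have rank k with right singular vectors V_k, let A ∈ ℝ^{m×n}, and let S ∈ ℝ^{n×c} be any matrix such that V_k^T S has full row rank k. Writing Ω = (V_k^T S)^† − (V_k^T S)^T and P^⊥ = I − V_k V_k^T, we have ||A − A S (B S)^† B||_F ≤ ||A P^⊥||_F + ||A P^⊥ S||_F · ||Ω||_2 + ||A P^⊥ S S^T V_k||_F. -/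
/-!
Since `Vᵀ S` has full row rank, its pseudoinverse `Q` is a right inverse of it, and the Penrose
conditions then force `(B S)^† = Q Σ⁻¹ Uᵀ`, so that `A S (B S)^† B = A S Q Vᵀ`. Splitting
`A S = A V Vᵀ S + A P^⊥ S`, the first part is reproduced exactly (`A V Vᵀ S Q Vᵀ = A V Vᵀ`),
which leaves `A - A S Q Vᵀ = A P^⊥ - A P^⊥ S (Q - (Vᵀ S)ᵀ) Vᵀ - A P^⊥ S Sᵀ V Vᵀ`.
Right multiplication by `Vᵀ` preserves the Frobenius norm, and the triangle inequality together
with `‖X Ω‖_F ≤ ‖X‖_F ‖Ω‖₂` finishes the proof.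
-/

open Matrix Finset
open scoped Classical
noncomputable section
variable {ι κ μ ν : Type*} [Fintype ι] [Fintype κ]

section Frobenius

attribute [local instance] Matrix.frobeniusNormedAddCommGroup

theorem frob_eq_frobenius_norm (X : Matrix ι κ ℝ) : frob X = ‖X‖ := by
  rw [frob, frobSq, frobenius_norm_def, Real.sqrt_eq_rpow]
  simp [Real.norm_eq_abs, sq_abs]

theorem frob_sub_sub_le (X Y Z : Matrix ι κ ℝ) :
    frob (X - Y - Z) ≤ frob X + frob Y + frob Z := by
  simp only [frob_eq_frobenius_norm]
  exact (norm_sub_le _ _).trans (add_le_add_left (norm_sub_le _ _) _)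

end Frobenius

theorem frobSq_eq_trace (X : Matrix ι κ ℝ) : frobSq X = trace (X * Xᵀ) := by
  simp [frobSq, trace, mul_apply, sq]

theorem frob_mul_transpose_of_orthonormal [Fintype μ] [DecidableEq μ] (M : Matrix ι μ ℝ)
    {V : Matrix κ μ ℝ} (hV : Vᵀ * V = 1) : frob (M * Vᵀ) = frob M := by
  rw [frob, frob, frobSq_eq_trace, frobSq_eq_trace, transpose_mul, transpose_transpose,
    Matrix.mul_assoc, ← Matrix.mul_assoc Vᵀ, hV, Matrix.one_mul]

theorem frobSq_eq_sum_norm_row_sq (X : Matrix ι κ ℝ) :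
    frobSq X = ∑ i, ‖WithLp.toLp 2 (X i)‖ ^ 2 := by
  simp [frobSq, EuclideanSpace.norm_sq_eq]

open scoped Matrix.Norms.L2Operator in
theorem specNorm_transpose [DecidableEq ι] [DecidableEq κ] (N : Matrix ι κ ℝ) :
    specNorm Nᵀ = specNorm N :=
  l2_opNorm_conjTranspose N

theorem norm_vecMul_le [DecidableEq ι] [DecidableEq κ] (x : ι → ℝ) (N : Matrix ι κ ℝ) :
    ‖WithLp.toLp 2 (x ᵥ* N)‖ ≤ ‖WithLp.toLp 2 x‖ * specNorm N := by
  rw [← specNorm_transpose, mul_comm, ← mulVec_transpose]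
  exact (LinearMap.toContinuousLinearMap (toEuclideanLin Nᵀ)).le_opNorm (WithLp.toLp 2 x)

theorem frob_mul_le_frob_mul_specNorm [Fintype μ] [DecidableEq ι] [DecidableEq κ]
    (M : Matrix μ ι ℝ) (N : Matrix ι κ ℝ) : frob (M * N) ≤ frob M * specNorm N := by
  have hM : 0 ≤ frobSq M := by rw [frobSq_eq_sum_norm_row_sq]; positivity
  have hsq : frobSq (M * N) ≤ (frob M * specNorm N) ^ 2 := by
    rw [mul_pow, frob, Real.sq_sqrt hM, frobSq_eq_sum_norm_row_sq, frobSq_eq_sum_norm_row_sq,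
      Finset.sum_mul]
    gcongr with i
    rw [← mul_pow]
    exact pow_le_pow_left₀ (norm_nonneg _) (norm_vecMul_le (M i) N) 2
  calc frob (M * N) ≤ √((frob M * specNorm N) ^ 2) := Real.sqrt_le_sqrt hsq
    _ = frob M * specNorm N := Real.sqrt_sq (mul_nonneg (Real.sqrt_nonneg _) (norm_nonneg _))

theorem IsPinv.unique_s14 {M : Matrix ι κ ℝ} {P P' : Matrix κ ι ℝ} (h : IsPinv M P)
    (h' : IsPinv M P') : P = P' := by
  obtain ⟨h1, h2, h3, h4⟩ := h
  obtain ⟨h1', h2', h3', h4'⟩ := h'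
  have hMP : M * P = M * P' := by
    calc M * P = (M * P' * M * P)ᵀ := by rw [h1', h3]
      _ = (M * P)ᵀ * (M * P')ᵀ := by rw [← transpose_mul, Matrix.mul_assoc (M * P')]
      _ = M * P' := by rw [h3, h3', ← Matrix.mul_assoc, h1]
  have hPM : P * M = P' * M := by
    calc P * M = (P * (M * P' * M))ᵀ := by rw [h1', h4]
      _ = (P' * M)ᵀ * (P * M)ᵀ := by rw [← transpose_mul]; simp only [Matrix.mul_assoc]
      _ = P' * M := by rw [h4, h4', Matrix.mul_assoc, ← Matrix.mul_assoc M, h1]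
  calc P = P * M * P := h2.symm
    _ = P' * M * P' := by rw [hPM, Matrix.mul_assoc, hMP, ← Matrix.mul_assoc]
    _ = P' := h2'

theorem IsPinv.mul_left [Fintype μ] [DecidableEq κ] [DecidableEq μ] {W : Matrix κ ι ℝ}
    {Q : Matrix ι κ ℝ} (h : IsPinv W Q) (hWQ : W * Q = 1) {L : Matrix μ κ ℝ} {L' : Matrix κ μ ℝ}
    (hL : L' * L = 1) (hLL' : (L * L')ᵀ = L * L') : IsPinv (L * W) (Q * L') := by
  have hprod : L * W * (Q * L') = L * L' := by
    rw [Matrix.mul_assoc, ← Matrix.mul_assoc W, hWQ, Matrix.one_mul]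
  have hprod' : Q * L' * (L * W) = Q * W := by
    rw [Matrix.mul_assoc, ← Matrix.mul_assoc L', hL, Matrix.one_mul]
  refine ⟨?_, ?_, ?_, ?_⟩
  · rw [hprod, Matrix.mul_assoc, ← Matrix.mul_assoc L', hL, Matrix.one_mul]
  · rw [hprod', ← Matrix.mul_assoc, h.2.1]
  · rw [hprod, hLL']
  · rw [hprod', h.2.2.2]

namespace Matrix

variable {K : Type*} [Field K]

theorem mulVec_surjective_of_rank_eq_card {W : Matrix κ ι K} (h : W.rank = Fintype.card κ) :
    Function.Surjective W.mulVec := by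
  have htop : LinearMap.range W.mulVecLin = ⊤ :=
    Submodule.eq_top_of_finrank_eq (by rw [← rank, h, Module.finrank_fintype_fun_eq_card])
  exact fun y => LinearMap.range_eq_top.mp htop y

theorem mul_eq_one_of_rank_eq_card [DecidableEq κ] {W : Matrix κ ι K} {Q : Matrix ι κ K}
    (h : W.rank = Fintype.card κ) (hWQW : W * Q * W = W) : W * Q = 1 := by
  refine toLin'.injective (LinearMap.ext fun y => ?_)
  obtain ⟨x, rfl⟩ := mulVec_surjective_of_rank_eq_card h y
  simp only [toLin'_apply, toLin'_one, LinearMap.id_apply, mulVec_mulVec, hWQW]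

theorem diagonal_mul_diagonal_inv [DecidableEq κ] {d : κ → K} (hd : ∀ i, d i ≠ 0) :
    diagonal d * diagonal d⁻¹ = 1 := by
  rw [diagonal_mul_diagonal, ← diagonal_one]
  exact congrArg diagonal (funext fun i => mul_inv_cancel₀ (hd i))

theorem diagonal_inv_mul_transpose_mul_mul_diagonal [DecidableEq κ] [Fintype μ]
    {U : Matrix μ κ K} (hU : Uᵀ * U = 1) {d : κ → K} (hd : ∀ i, d i ≠ 0) :
    diagonal d⁻¹ * Uᵀ * (U * diagonal d) = 1 := by
  rw [Matrix.mul_assoc, ← Matrix.mul_assoc Uᵀ, hU, Matrix.one_mul,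
    mul_eq_one_comm.mp (diagonal_mul_diagonal_inv hd)]

theorem mul_diagonal_mul_diagonal_inv_mul_transpose [DecidableEq κ]
    (U : Matrix μ κ K) {d : κ → K} (hd : ∀ i, d i ≠ 0) :
    U * diagonal d * (diagonal d⁻¹ * Uᵀ) = U * Uᵀ := by
  rw [Matrix.mul_assoc, ← Matrix.mul_assoc (diagonal d), diagonal_mul_diagonal_inv hd,
    Matrix.one_mul]

theorem sub_mul_mul_mul_transpose_eq_of_mul_eq_one {R : Type*} [CommRing R] [Fintype ν]
    [DecidableEq ι] [DecidableEq κ] (A : Matrix μ ι R) (V : Matrix ι κ R) (S : Matrix ι ν R)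
    (Q : Matrix ν κ R) (hSQ : Vᵀ * S * Q = 1) :
    A - A * S * Q * Vᵀ
      = A * (1 - V * Vᵀ) - A * (1 - V * Vᵀ) * S * (Q - (Vᵀ * S)ᵀ) * Vᵀ
        - A * (1 - V * Vᵀ) * S * Sᵀ * V * Vᵀ := by
  have hrange : A * (V * (Vᵀ * (S * (Q * Vᵀ)))) = A * (V * Vᵀ) := by
    rw [← Matrix.mul_assoc Vᵀ, ← Matrix.mul_assoc (Vᵀ * S), hSQ, Matrix.one_mul]
  simp only [Matrix.mul_sub, Matrix.sub_mul, Matrix.mul_one, transpose_mul, transpose_transpose,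
    Matrix.mul_assoc, hrange]
  abel

end Matrix

/-- Deterministic structural bound for subsampled regression. -/
theorem subsampled_regression_structural_bound (m r n c k : ℕ)
    (B : Matrix (Fin r) (Fin n) ℝ)
    (U : Matrix (Fin r) (Fin k) ℝ) (hU : Uᵀ * U = 1)
    (V : Matrix (Fin n) (Fin k) ℝ) (hV : Vᵀ * V = 1)
    (d : Fin k → ℝ) (hd : ∀ i, 0 < d i)
    (hB : B = U * Matrix.diagonal d * Vᵀ)
    (S : Matrix (Fin n) (Fin c) ℝ) (hrank : (Vᵀ * S).rank = k)
    (P : Matrix (Fin c) (Fin r) ℝ) (hP : IsPinv (B * S) P)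
    (Q : Matrix (Fin c) (Fin k) ℝ) (hQ : IsPinv (Vᵀ * S) Q)
    (A : Matrix (Fin m) (Fin n) ℝ) :
    frob (A - A * S * P * B)
      ≤ frob (A * ((1 : Matrix (Fin n) (Fin n) ℝ) - V * Vᵀ))
        + frob (A * ((1 : Matrix (Fin n) (Fin n) ℝ) - V * Vᵀ) * S)
            * specNorm (Q - (Vᵀ * S)ᵀ)
        + frob (A * ((1 : Matrix (Fin n) (Fin n) ℝ) - V * Vᵀ) * S * Sᵀ * V) := by
  have hWQ : Vᵀ * S * Q = 1 := mul_eq_one_of_rank_eq_card (by simpa using hrank) hQ.1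
  have hd0 : ∀ i, d i ≠ 0 := fun i => (hd i).ne'
  have hL := diagonal_inv_mul_transpose_mul_mul_diagonal hU hd0
  have hPQ : P = Q * (diagonal d⁻¹ * Uᵀ) := hP.unique_s14 <| by
    rw [hB, Matrix.mul_assoc _ Vᵀ]
    refine hQ.mul_left hWQ hL ?_
    rw [mul_diagonal_mul_diagonal_inv_mul_transpose U hd0, transpose_mul, transpose_transpose]
  have hASPB : A * S * P * B = A * S * Q * Vᵀ := by
    rw [hPQ, hB, Matrix.mul_assoc (A * S), Matrix.mul_assoc Q, ← Matrix.mul_assoc _ _ Vᵀ, hL,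
      Matrix.one_mul, Matrix.mul_assoc (A * S) Q]
  set Pperp := (1 : Matrix (Fin n) (Fin n) ℝ) - V * Vᵀ
  calc frob (A - A * S * P * B)
      = frob (A * Pperp - A * Pperp * S * (Q - (Vᵀ * S)ᵀ) * Vᵀ
          - A * Pperp * S * Sᵀ * V * Vᵀ) := by
        rw [hASPB, sub_mul_mul_mul_transpose_eq_of_mul_eq_one A V S Q hWQ]
    _ ≤ frob (A * Pperp) + frob (A * Pperp * S * (Q - (Vᵀ * S)ᵀ))
          + frob (A * Pperp * S * Sᵀ * V) := by
        rw [← frob_mul_transpose_of_orthonormal _ hV, ← frob_mul_transpose_of_orthonormal _ hV]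
        exact frob_sub_sub_le _ _ _
    _ ≤ _ := by gcongr; exact frob_mul_le_frob_mul_specNorm _ _
end
end

section
/- Deterministic relative-error bound for subsampled regression: under the setup of the structural bound, if additionally ||I_k − V_k^T S S^T V_k||_2 ≤ ε₁/2 with ε₁ ∈ (0,1), ||A P^⊥ S||_F ≤ c₁ ||A P^⊥||_F, and ||A P^⊥ (V_k − S S^T V_k)||_F ≤ c₂ ||A P^⊥||_F, then ||A − A S (B S)^† B||_F ≤ (1 + c₁ ε₁/√2 + c₂) ||A − A B^† B||_F. -/
open Matrix Finset
open scoped Classical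
noncomputable section
/-!
Write `B = U D Vᵀ`, `W = Vᵀ S`, `P = 1 - V Vᵀ`. Since `‖1 - W Wᵀ‖₂ < 1`, `W Wᵀ` is invertible, and
the Penrose conditions identify `(B S)† = Wᵀ (W Wᵀ)⁻¹ D⁻¹ Uᵀ` and `B† = V D⁻¹ Uᵀ`. Hence
`A - A B† B = A P`, and since `Wᵀ (W Wᵀ)⁻¹` is a right inverse of `W`, the part `A V Vᵀ` of `A` is
reproduced exactly: `A - A S (B S)† B = A P - A P S Wᵀ (W Wᵀ)⁻¹ Vᵀ`. Splitting
`Wᵀ (W Wᵀ)⁻¹ = Wᵀ + N` leaves `A P S Wᵀ = -A P (V - S Sᵀ V)` (as `A P V = 0`) and `A P S N`, where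
`Nᵀ N = E (W Wᵀ)⁻¹ E` with `E = 1 - W Wᵀ` gives `‖N‖₂ ≤ (ε₁/2) / √(1 - ε₁/2) ≤ ε₁ / √2`.
-/

variable {l o m n p q : Type*} [Fintype m] [Fintype n] [Fintype p] [Fintype q]

theorem IsPinv.unique_s15 {M : Matrix m n ℝ} {P Q : Matrix n m ℝ} (hP : IsPinv M P)
    (hQ : IsPinv M Q) : P = Q := by
  obtain ⟨hMPM, hPMP, hMP, hPM⟩ := hP
  obtain ⟨hMQM, hQMQ, hMQ, hQM⟩ := hQ
  have hP_eq : P = P * M * Q := calc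
    P = P * (M * P)ᵀ := by rw [hMP, ← Matrix.mul_assoc, hPMP]
    _ = P * (M * Q * M * P)ᵀ := by rw [hMQM]
    _ = P * ((M * P)ᵀ * (M * Q)ᵀ) := by simp only [transpose_mul, Matrix.mul_assoc]
    _ = P * M * Q := by simp only [hMP, hMQ, ← Matrix.mul_assoc, hPMP]
  have hQ_eq : Q = P * M * Q := calc
    Q = (Q * M)ᵀ * Q := by rw [hQM, hQMQ]
    _ = (Q * (M * P * M))ᵀ * Q := by rw [hMPM]
    _ = (P * M)ᵀ * (Q * M)ᵀ * Q := by simp only [transpose_mul, Matrix.mul_assoc]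
    _ = P * M * Q := by rw [hPM, hQM, Matrix.mul_assoc (P * M), hQMQ]
  rw [hP_eq, ← hQ_eq]

theorem isPinv_mul_mul [DecidableEq p] {U : Matrix m p ℝ} {D : Matrix p p ℝ} {W : Matrix p n ℝ}
    (hU : Uᵀ * U = 1) (hD : IsUnit D) (hW : IsUnit (W * Wᵀ)) :
    IsPinv (U * D * W) (Wᵀ * (W * Wᵀ)⁻¹ * D⁻¹ * Uᵀ) := by
  rw [isUnit_iff_isUnit_det] at hD hW
  set G := (W * Wᵀ)⁻¹
  have hWG : W * Wᵀ * G = 1 := mul_nonsing_inv _ hW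
  have hG : Gᵀ = G := by rw [transpose_nonsing_inv, transpose_mul, transpose_transpose]
  have hMP : U * D * W * (Wᵀ * G * D⁻¹ * Uᵀ) = U * Uᵀ := calc
    _ = U * D * (W * Wᵀ * G) * D⁻¹ * Uᵀ := by simp only [Matrix.mul_assoc]
    _ = U * Uᵀ := by
      rw [hWG, Matrix.mul_one, Matrix.mul_assoc U D, mul_nonsing_inv _ hD, Matrix.mul_one]
  have hPM : Wᵀ * G * D⁻¹ * Uᵀ * (U * D * W) = Wᵀ * G * W := calc
    _ = Wᵀ * G * (D⁻¹ * (Uᵀ * U) * D) * W := by simp only [Matrix.mul_assoc]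
    _ = Wᵀ * G * W := by rw [hU, Matrix.mul_one, nonsing_inv_mul _ hD, Matrix.mul_one]
  refine ⟨?_, ?_, ?_, ?_⟩
  · calc U * D * W * (Wᵀ * G * D⁻¹ * Uᵀ) * (U * D * W) = U * (Uᵀ * U) * D * W := by
          rw [hMP]; simp only [Matrix.mul_assoc]
      _ = U * D * W := by rw [hU, Matrix.mul_one]
  · calc Wᵀ * G * D⁻¹ * Uᵀ * (U * D * W) * (Wᵀ * G * D⁻¹ * Uᵀ)
          = Wᵀ * G * (W * Wᵀ * G) * D⁻¹ * Uᵀ := by rw [hPM]; simp only [Matrix.mul_assoc]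
      _ = Wᵀ * G * D⁻¹ * Uᵀ := by rw [hWG, Matrix.mul_one]
  · rw [hMP, transpose_mul, transpose_transpose]
  · rw [hPM, transpose_mul, transpose_mul, hG, transpose_transpose, Matrix.mul_assoc]

theorem frob_nonneg (A : Matrix m n ℝ) : 0 ≤ frob A := Real.sqrt_nonneg _

section Frobenius

open scoped Matrix.Norms.Frobenius

theorem frob_eq_frobenius_norm_s15 (A : Matrix m n ℝ) : frob A = ‖A‖ := by
  rw [frobenius_norm_def, frob, frobSq, Real.sqrt_eq_rpow]
  simp

theorem frob_add_le (A B : Matrix m n ℝ) : frob (A + B) ≤ frob A + frob B := by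
  simpa only [frob_eq_frobenius_norm_s15] using norm_add_le A B

theorem frob_sub_le (A B : Matrix m n ℝ) : frob (A - B) ≤ frob A + frob B := by
  simpa only [frob_eq_frobenius_norm_s15] using norm_sub_le A B

theorem frob_neg (A : Matrix m n ℝ) : frob (-A) = frob A := by
  simp only [frob_eq_frobenius_norm_s15, norm_neg]

end Frobenius

theorem frob_sq_eq_sum_rows (A : Matrix m n ℝ) : frob A ^ 2 = ∑ i, ‖WithLp.toLp 2 (A i)‖ ^ 2 := by
  rw [frob, Real.sq_sqrt (by unfold frobSq; positivity), frobSq]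
  simp [EuclideanSpace.norm_sq_eq]

open scoped Matrix.Norms.L2Operator

theorem l2_opNorm_one_le [DecidableEq n] : ‖(1 : Matrix n n ℝ)‖ ≤ 1 := by
  rw [cstar_norm_def, map_one]
  exact ContinuousLinearMap.norm_id_le

theorem l2_opNorm_transpose [DecidableEq m] [DecidableEq n] (A : Matrix m n ℝ) : ‖Aᵀ‖ = ‖A‖ := by
  rw [← conjTranspose_eq_transpose_of_trivial, l2_opNorm_conjTranspose]

theorem l2_opNorm_le_one_of_transpose_mul_self [DecidableEq n] {V : Matrix m n ℝ}
    (hV : Vᵀ * V = 1) : ‖V‖ ≤ 1 := by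
  have h := l2_opNorm_conjTranspose_mul_self V
  rw [conjTranspose_eq_transpose_of_trivial, hV] at h
  nlinarith [l2_opNorm_one_le (n := n), norm_nonneg V]

theorem frob_mul_le [DecidableEq n] [DecidableEq p] (X : Matrix m n ℝ) (N : Matrix n p ℝ) :
    frob (X * N) ≤ frob X * ‖N‖ := by
  refine le_of_pow_le_pow_left₀ two_ne_zero (by positivity [frob_nonneg X]) ?_
  rw [mul_pow, frob_sq_eq_sum_rows, frob_sq_eq_sum_rows, Finset.sum_mul]
  gcongr with i
  have hrow : (X * N) i = Nᵀ *ᵥ X i := by rw [← vecMul_transpose, transpose_transpose]; rfl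
  rw [hrow, ← l2_opNorm_transpose N, mul_comm, ← mul_pow]
  gcongr
  exact l2_opNorm_mulVec Nᵀ (WithLp.toLp 2 (X i))

theorem frob_mul_transpose_le [DecidableEq n] [DecidableEq p] (M : Matrix m p ℝ) {V : Matrix n p ℝ}
    (hV : Vᵀ * V = 1) : frob (M * Vᵀ) ≤ frob M := calc
  frob (M * Vᵀ) ≤ frob M * ‖Vᵀ‖ := frob_mul_le M Vᵀ
  _ ≤ frob M := by
    rw [l2_opNorm_transpose]
    exact mul_le_of_le_one_right (frob_nonneg M) (l2_opNorm_le_one_of_transpose_mul_self hV)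

theorem specNorm_eq_l2_opNorm [DecidableEq n] (A : Matrix m n ℝ) : specNorm A = ‖A‖ := rfl

theorem isUnit_of_l2_opNorm_one_sub_lt [DecidableEq n] {X : Matrix n n ℝ} (hX : ‖1 - X‖ < 1) :
    IsUnit X := by
  simpa using (Units.oneSub (1 - X) hX).isUnit

theorem l2_opNorm_nonsing_inv_le [DecidableEq n] {X : Matrix n n ℝ} {δ : ℝ} (hX : ‖1 - X‖ ≤ δ)
    (hδ : δ < 1) : ‖X⁻¹‖ ≤ (1 - δ)⁻¹ := by
  have hunit := (isUnit_iff_isUnit_det X).1 (isUnit_of_l2_opNorm_one_sub_lt (hX.trans_lt hδ))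
  have hinv : X⁻¹ = 1 + (1 - X) * X⁻¹ := by
    rw [Matrix.sub_mul, Matrix.one_mul, mul_nonsing_inv _ hunit, add_sub_cancel]
  have hle : ‖X⁻¹‖ ≤ 1 + δ * ‖X⁻¹‖ := calc
    ‖X⁻¹‖ ≤ ‖(1 : Matrix n n ℝ)‖ + ‖1 - X‖ * ‖X⁻¹‖ := by
      nth_rw 1 [hinv]
      exact (norm_add_le _ _).trans (by gcongr; exact norm_mul_le _ _)
    _ ≤ 1 + δ * ‖X⁻¹‖ := by gcongr; exact l2_opNorm_one_le
  rw [← one_div (1 - δ), le_div_iff₀ (sub_pos.2 hδ)]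
  linarith

theorem l2_opNorm_transpose_mul_inv_sub_transpose_le [DecidableEq m]
    {W : Matrix m n ℝ} {δ : ℝ} (hW : ‖1 - W * Wᵀ‖ ≤ δ) (hδ : δ < 1) :
    ‖Wᵀ * (W * Wᵀ)⁻¹ - Wᵀ‖ ≤ δ / √(1 - δ) := by
  have hunit := (isUnit_iff_isUnit_det _).1 (isUnit_of_l2_opNorm_one_sub_lt (hW.trans_lt hδ))
  set E := 1 - W * Wᵀ
  set G := (W * Wᵀ)⁻¹
  have hδ0 : 0 ≤ δ := (norm_nonneg E).trans hW
  have hG : ‖G‖ ≤ (1 - δ)⁻¹ := l2_opNorm_nonsing_inv_le hW hδ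
  have hGE : G - 1 = G * E := by rw [Matrix.mul_sub, Matrix.mul_one, nonsing_inv_mul _ hunit]
  have hEG : (G - 1) * (W * Wᵀ) = E := by
    rw [Matrix.sub_mul, nonsing_inv_mul _ hunit, Matrix.one_mul]
  have hGt : Gᵀ = G := by rw [transpose_nonsing_inv, transpose_mul, transpose_transpose]
  set N := Wᵀ * G - Wᵀ
  have hN : N = Wᵀ * (G - 1) := by rw [Matrix.mul_sub, Matrix.mul_one]
  have hNN : Nᵀ * N = E * (G * E) := calc
    Nᵀ * N = (G - 1) * (W * Wᵀ) * (G - 1) := by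
      rw [hN, transpose_mul, transpose_sub, transpose_one, hGt, transpose_transpose]
      simp only [Matrix.mul_assoc]
    _ = E * (G * E) := by rw [hEG, hGE]
  have hN2 : ‖N‖ ^ 2 ≤ δ ^ 2 / (1 - δ) := calc
    ‖N‖ ^ 2 = ‖E * (G * E)‖ := by
      rw [sq, ← l2_opNorm_conjTranspose_mul_self, conjTranspose_eq_transpose_of_trivial, hNN]
    _ ≤ ‖E‖ * (‖G‖ * ‖E‖) := (norm_mul_le _ _).trans (by gcongr; exact norm_mul_le _ _)
    _ ≤ δ * ((1 - δ)⁻¹ * δ) := by gcongr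
    _ = δ ^ 2 / (1 - δ) := by ring
  calc ‖N‖ ≤ √(δ ^ 2 / (1 - δ)) := Real.le_sqrt_of_sq_le hN2
    _ = δ / √(1 - δ) := by rw [Real.sqrt_div' _ (sub_pos.2 hδ).le, Real.sqrt_sq hδ0]

theorem mul_mul_nonsing_inv_mul_transpose_mul [DecidableEq p] {U : Matrix m p ℝ} {D : Matrix p p ℝ}
    (hU : Uᵀ * U = 1) (hD : IsUnit D) (X : Matrix l n ℝ) (Y : Matrix n p ℝ) (V : Matrix o p ℝ) :
    X * (Y * D⁻¹ * Uᵀ) * (U * D * Vᵀ) = X * Y * Vᵀ := calc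
  _ = X * Y * (D⁻¹ * (Uᵀ * U) * D) * Vᵀ := by simp only [Matrix.mul_assoc]
  _ = X * Y * Vᵀ := by
    rw [hU, Matrix.mul_one, nonsing_inv_mul _ ((isUnit_iff_isUnit_det _).1 hD), Matrix.mul_one]

theorem mul_one_sub_mul_transpose_mul [DecidableEq n] [DecidableEq p] {V : Matrix n p ℝ}
    (hV : Vᵀ * V = 1) (A : Matrix l n ℝ) : A * (1 - V * Vᵀ) * V = 0 := by
  rw [Matrix.mul_assoc, Matrix.sub_mul, Matrix.one_mul, Matrix.mul_assoc, hV, Matrix.mul_one,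
    sub_self, Matrix.mul_zero]

theorem sub_mul_mul_transpose_eq_of_mul_eq_one [DecidableEq n] [DecidableEq p] (A : Matrix l n ℝ)
    (S : Matrix n q ℝ) {V : Matrix n p ℝ} {Y : Matrix q p ℝ} (hY : Vᵀ * S * Y = 1) :
    A - A * S * Y * Vᵀ = A * (1 - V * Vᵀ) - A * (1 - V * Vᵀ) * S * Y * Vᵀ := by
  have hVV : A * (V * Vᵀ) * S * Y * Vᵀ = A * (V * Vᵀ) := calc
    _ = A * V * (Vᵀ * S * Y) * Vᵀ := by simp only [Matrix.mul_assoc]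
    _ = A * (V * Vᵀ) := by rw [hY, Matrix.mul_one, Matrix.mul_assoc]
  rw [Matrix.mul_sub, Matrix.mul_one, Matrix.sub_mul, Matrix.sub_mul, Matrix.sub_mul, hVV]
  abel

theorem frob_mul_mul_transpose_eq_of_mul_eq_zero {Z : Matrix m n ℝ} {V : Matrix n p ℝ}
    (hZV : Z * V = 0) (S : Matrix n q ℝ) :
    frob (Z * S * (Vᵀ * S)ᵀ) = frob (Z * (V - S * Sᵀ * V)) := by
  rw [Matrix.mul_sub, hZV, zero_sub, frob_neg, transpose_mul, transpose_transpose]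
  simp only [Matrix.mul_assoc]

theorem frob_sub_mul_mul_transpose_le [DecidableEq n] [DecidableEq p] [DecidableEq q]
    (Z : Matrix m n ℝ) (S : Matrix n q ℝ) (Y Y₀ : Matrix q p ℝ) {V : Matrix n p ℝ}
    (hV : Vᵀ * V = 1) :
    frob (Z - Z * S * Y * Vᵀ) ≤ frob Z + (frob (Z * S * Y₀) + frob (Z * S) * ‖Y - Y₀‖) := calc
  _ ≤ frob Z + frob (Z * S * Y * Vᵀ) := frob_sub_le _ _
  _ ≤ frob Z + frob (Z * S * Y) := by gcongr; exact frob_mul_transpose_le _ hV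
  _ ≤ frob Z + (frob (Z * S * Y₀) + frob (Z * S) * ‖Y - Y₀‖) := by
    gcongr
    calc frob (Z * S * Y) = frob (Z * S * Y₀ + Z * S * (Y - Y₀)) := by
          rw [Matrix.mul_sub, add_sub_cancel]
      _ ≤ frob (Z * S * Y₀) + frob (Z * S * (Y - Y₀)) := frob_add_le _ _
      _ ≤ frob (Z * S * Y₀) + frob (Z * S) * ‖Y - Y₀‖ := by gcongr; exact frob_mul_le _ _

theorem half_div_sqrt_one_sub_half_le {ε : ℝ} (h0 : 0 ≤ ε) (h1 : ε ≤ 1) :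
    ε / 2 / √(1 - ε / 2) ≤ ε / √2 := by
  rw [div_div]
  refine div_le_div_of_nonneg_left h0 (by positivity) ?_
  have hs := Real.sq_sqrt (show 0 ≤ 1 - ε / 2 by linarith)
  have hs2 := Real.sq_sqrt (show (0 : ℝ) ≤ 2 by norm_num)
  nlinarith [Real.sqrt_nonneg 2, Real.sqrt_nonneg (1 - ε / 2)]

/-- Deterministic relative-error bound for subsampled regression. -/
theorem subsampled_regression_relative_error (m r n c k : ℕ)
    (A : Matrix (Fin m) (Fin n) ℝ)
    (B : Matrix (Fin r) (Fin n) ℝ)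
    (U : Matrix (Fin r) (Fin k) ℝ) (hU : Uᵀ * U = 1)
    (V : Matrix (Fin n) (Fin k) ℝ) (hV : Vᵀ * V = 1)
    (d : Fin k → ℝ) (hd : ∀ i, 0 < d i)
    (hB : B = U * Matrix.diagonal d * Vᵀ)
    (S : Matrix (Fin n) (Fin c) ℝ)
    (PBS : Matrix (Fin c) (Fin r) ℝ) (hPBS : IsPinv (B * S) PBS)
    (PB : Matrix (Fin n) (Fin r) ℝ) (hPB : IsPinv B PB)
    (ε₁ c₁ c₂ : ℝ) (hε0 : 0 < ε₁) (hε1 : ε₁ < 1)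
    (h1 : specNorm ((1 : Matrix (Fin k) (Fin k) ℝ) - (Vᵀ * S) * (Sᵀ * V)) ≤ ε₁ / 2)
    (h2 : frob (A * ((1 : Matrix (Fin n) (Fin n) ℝ) - V * Vᵀ) * S)
            ≤ c₁ * frob (A * ((1 : Matrix (Fin n) (Fin n) ℝ) - V * Vᵀ)))
    (h3 : frob (A * ((1 : Matrix (Fin n) (Fin n) ℝ) - V * Vᵀ) * (V - S * Sᵀ * V))
            ≤ c₂ * frob (A * ((1 : Matrix (Fin n) (Fin n) ℝ) - V * Vᵀ))) :
    frob (A - A * S * PBS * B)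
      ≤ (1 + c₁ * ε₁ / Real.sqrt 2 + c₂) * frob (A - A * PB * B) := by
  set D := diagonal d
  set W := Vᵀ * S
  set Z := A * (1 - V * Vᵀ)
  have hD : IsUnit D := isUnit_diagonal.2 (Pi.isUnit_iff.2 fun i => (hd i).ne'.isUnit)
  have hWW : ‖1 - W * Wᵀ‖ ≤ ε₁ / 2 := by
    simpa only [specNorm_eq_l2_opNorm, W, transpose_mul, transpose_transpose] using h1
  have hW : IsUnit (W * Wᵀ) := isUnit_of_l2_opNorm_one_sub_lt (by linarith)
  have hPB_eq : PB = V * D⁻¹ * Uᵀ :=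
    hPB.unique_s15 (by simpa [hB, hV] using isPinv_mul_mul hU hD (W := Vᵀ) (by simp [hV]))
  have hPBS_eq : PBS = Wᵀ * (W * Wᵀ)⁻¹ * D⁻¹ * Uᵀ :=
    hPBS.unique_s15 (by rw [hB, Matrix.mul_assoc _ Vᵀ]; exact isPinv_mul_mul hU hD hW)
  have hres_B : A - A * PB * B = Z := by
    rw [hPB_eq, hB, mul_mul_nonsing_inv_mul_transpose_mul hU hD, Matrix.mul_assoc]
    simp only [Z, Matrix.mul_sub, Matrix.mul_one]
  have hres : A - A * S * PBS * B = Z - Z * S * (Wᵀ * (W * Wᵀ)⁻¹) * Vᵀ := by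
    rw [hPBS_eq, hB, mul_mul_nonsing_inv_mul_transpose_mul hU hD]
    refine sub_mul_mul_transpose_eq_of_mul_eq_one A S ?_
    rw [← Matrix.mul_assoc]
    exact mul_nonsing_inv _ ((isUnit_iff_isUnit_det _).1 hW)
  have hZSW : frob (Z * S * Wᵀ) ≤ c₂ * frob Z :=
    (frob_mul_mul_transpose_eq_of_mul_eq_zero (mul_one_sub_mul_transpose_mul hV A) S).trans_le h3
  have hN : ‖Wᵀ * (W * Wᵀ)⁻¹ - Wᵀ‖ ≤ ε₁ / √2 :=
    (l2_opNorm_transpose_mul_inv_sub_transpose_le hWW (by linarith)).trans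
      (half_div_sqrt_one_sub_half_le hε0.le hε1.le)
  calc
    frob (A - A * S * PBS * B) = frob (Z - Z * S * (Wᵀ * (W * Wᵀ)⁻¹) * Vᵀ) := by rw [hres]
    _ ≤ frob Z + (frob (Z * S * Wᵀ) + frob (Z * S) * ‖Wᵀ * (W * Wᵀ)⁻¹ - Wᵀ‖) :=
      frob_sub_mul_mul_transpose_le _ _ _ _ hV
    _ ≤ frob Z + (c₂ * frob Z + c₁ * frob Z * (ε₁ / √2)) := by
      gcongr
      exact (frob_nonneg _).trans h2
    _ = (1 + c₁ * ε₁ / √2 + c₂) * frob (A - A * PB * B) := by rw [hres_B]; ring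
end
end
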